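/- arXiv:math/0609447 — 6 statements merged into one kernel-verified Lean document; each statement's English description precedes it below -/
import Mathlib

section
/- For a spherical triangle with angles α, β, γ opposite to sides of lengths a, b, c respectively, the partial derivative of the angle α with respect to the side length a equals 1/(sin b · sin γ). -/
open Real

set_option maxHeartbeats 1000000 in
/-- For a spherical triangle with angles α, β, γ opposite to sides a, b, c
(angles determined by the spherical law of cosines), ∂α/∂a = 1/(sin b · sin γ). -/
theorem spherical_angle_deriv_opposite_side
    (a b c : ℝ) (ha : 0 < a) (hb : 0 < b) (hc : 0 < c)
    (ha' : a < π) (hb' : b < π) (hc' : c < π)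
    (h1 : a < b + c) (h2 : b < a + c) (h3 : c < a + b) (h4 : a + b + c < 2 * π) :
    HasDerivAt (fun s => arccos ((cos s - cos b * cos c) / (sin b * sin c)))
      (1 / (sin b * sin (arccos ((cos c - cos a * cos b) / (sin a * sin b))))) a := by
  have hsa : 0 < sin a := Real.sin_pos_of_pos_of_lt_pi ha ha'
  have hsb : 0 < sin b := Real.sin_pos_of_pos_of_lt_pi hb hb'
  have hsc : 0 < sin c := Real.sin_pos_of_pos_of_lt_pi hc hc'
  set u : ℝ := (cos a - cos b * cos c) / (sin b * sin c) with hu_def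
  set v : ℝ := (cos c - cos a * cos b) / (sin a * sin b) with hv_def
  have hu2 : u < 1 := by
    rw [hu_def, div_lt_one (by positivity)]
    have h : cos a < cos |b - c| :=
      Real.cos_lt_cos_of_nonneg_of_le_pi (abs_nonneg _) ha'.le
        (by rw [abs_sub_lt_iff]; constructor <;> linarith)
    rw [Real.cos_abs, Real.cos_sub] at h
    linarith
  have hu1 : -1 < u := by
    rw [hu_def, lt_div_iff₀ (by positivity)]
    have h : cos (b + c) < cos a := by
      rcases le_or_gt (b + c) π with h | h
      · exact Real.cos_lt_cos_of_nonneg_of_le_pi ha.le h h1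
      · have := Real.cos_lt_cos_of_nonneg_of_le_pi ha.le
          (show 2 * π - (b + c) ≤ π by linarith) (by linarith)
        rwa [Real.cos_two_pi_sub] at this
    rw [Real.cos_add] at h
    linarith
  set K : ℝ := 1 - cos a ^ 2 - cos b ^ 2 - cos c ^ 2 + 2 * cos a * cos b * cos c with hK_def
  have ea : sin a ^ 2 = 1 - cos a ^ 2 := Real.sin_sq a
  have eb : sin b ^ 2 = 1 - cos b ^ 2 := Real.sin_sq b
  have ec : sin c ^ 2 = 1 - cos c ^ 2 := Real.sin_sq c
  have hu_sq : 1 - u ^ 2 = K / (sin b * sin c) ^ 2 := by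
    have e : (sin b * sin c) ^ 2 - (cos a - cos b * cos c) ^ 2 = K := by
      rw [hK_def, mul_pow, eb, ec]; ring
    rw [hu_def, div_pow, one_sub_div (by positivity), e]
  have hv_sq : 1 - v ^ 2 = K / (sin a * sin b) ^ 2 := by
    have e : (sin a * sin b) ^ 2 - (cos c - cos a * cos b) ^ 2 = K := by
      rw [hK_def, mul_pow, ea, eb]; ring
    rw [hv_def, div_pow, one_sub_div (by positivity), e]
  have hK : 0 < K := by
    have h : 0 < 1 - u ^ 2 := by nlinarith
    rw [hu_sq] at h
    have := mul_pos h (show (0:ℝ) < (sin b * sin c) ^ 2 by positivity)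
    rwa [div_mul_cancel₀] at this
    positivity
  have hsqrtu : Real.sqrt (1 - u ^ 2) = Real.sqrt K / (sin b * sin c) := by
    rw [hu_sq, Real.sqrt_div hK.le, Real.sqrt_sq (by positivity)]
  have hsqrtv : Real.sqrt (1 - v ^ 2) = Real.sqrt K / (sin a * sin b) := by
    rw [hv_sq, Real.sqrt_div hK.le, Real.sqrt_sq (by positivity)]
  have hder : HasDerivAt (fun s => arccos ((cos s - cos b * cos c) / (sin b * sin c)))
      (-(1 / Real.sqrt (1 - u ^ 2)) * (-sin a / (sin b * sin c))) a := by
    have hin : HasDerivAt (fun s => (cos s - cos b * cos c) / (sin b * sin c))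
        (-sin a / (sin b * sin c)) a :=
      ((Real.hasDerivAt_cos a).sub_const _).div_const _
    exact (Real.hasDerivAt_arccos (by linarith) (by linarith)).comp a hin
  convert hder using 1
  rw [Real.sin_arccos, hsqrtv, hsqrtu]
  have hsK : 0 < Real.sqrt K := Real.sqrt_pos.mpr hK
  field_simp
end

section
/- For a Euclidean triangle with angles α, β, γ opposite to sides a, b, c, the partial derivative of α with respect to a equals 1/(b sin γ), and the partial derivative of α with respect to b equals −(cot γ)/b. -/
open Real

/-!
Write α = arccos (cos α) with cos α = (b² + c² - a²)/(2bc) from the law of cosines, so that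
∂α = -∂(cos α)/sin α. The partial derivatives of cos α are -a/(bc) in a and
(a² + b² - c²)/(2b²c) = (a/(bc)) cos γ in b, and the law of sines c sin α = a sin γ turns
a/(bc sin α) into 1/(b sin γ). The law of sines itself comes from
sin α = √(16 Δ²)/(2bc), with Δ the area given by Heron's formula.
-/

theorem HasDerivAt.arccos {f : ℝ → ℝ} {f' x : ℝ} (hf : HasDerivAt f f' x)
    (h₁ : -1 < f x) (h₂ : f x < 1) :
    HasDerivAt (fun t => Real.arccos (f t)) (-f' / Real.sin (Real.arccos (f x))) x := by
  refine ((hasDerivAt_arccos h₁.ne' h₂.ne).comp x hf).congr_deriv ?_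
  rw [sin_arccos]
  ring

theorem sin_arccos_pos {x : ℝ} (h₁ : -1 < x) (h₂ : x < 1) : 0 < sin (arccos x) := by
  rw [sin_arccos, sqrt_pos]
  nlinarith

/-- Sixteen times the squared area of the triangle, by Heron's formula. -/
def heronProduct (a b c : ℝ) : ℝ := (a + b + c) * (-a + b + c) * (a - b + c) * (a + b - c)

theorem heronProduct_pos {a b c : ℝ} (h₁ : a < b + c) (h₂ : b < a + c) (h₃ : c < a + b) :
    0 < heronProduct a b c := by
  unfold heronProduct
  apply_rules [mul_pos] <;> linarith

theorem heronProduct_rotate (a b c : ℝ) : heronProduct c a b = heronProduct a b c := by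
  unfold heronProduct; ring

theorem one_sub_sq_cosineRule {a b c : ℝ} (hb : b ≠ 0) (hc : c ≠ 0) :
    1 - ((b ^ 2 + c ^ 2 - a ^ 2) / (2 * b * c)) ^ 2 = heronProduct a b c / (2 * b * c) ^ 2 := by
  unfold heronProduct
  field_simp
  ring

theorem cosineRule_mem_Ioo {a b c : ℝ} (h₁ : a < b + c) (h₂ : b < a + c) (h₃ : c < a + b) :
    (b ^ 2 + c ^ 2 - a ^ 2) / (2 * b * c) ∈ Set.Ioo (-1) 1 := by
  have h : 0 < 1 - ((b ^ 2 + c ^ 2 - a ^ 2) / (2 * b * c)) ^ 2 := by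
    rw [one_sub_sq_cosineRule (by linarith) (by linarith)]
    have := heronProduct_pos h₁ h₂ h₃
    have : 0 < b := by linarith
    have : 0 < c := by linarith
    positivity
  rw [Set.mem_Ioo, ← abs_lt, ← sq_lt_one_iff_abs_lt_one]
  linarith

theorem sin_arccos_cosineRule {a b c : ℝ} (hb : 0 < b) (hc : 0 < c) :
    sin (arccos ((b ^ 2 + c ^ 2 - a ^ 2) / (2 * b * c))) = √(heronProduct a b c) / (2 * b * c) := by
  rw [sin_arccos, one_sub_sq_cosineRule hb.ne' hc.ne', sqrt_div' _ (by positivity), sqrt_sq (by positivity)]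

theorem law_sin_arccos {a b c : ℝ} (ha : 0 < a) (hb : 0 < b) (hc : 0 < c) :
    c * sin (arccos ((b ^ 2 + c ^ 2 - a ^ 2) / (2 * b * c))) =
      a * sin (arccos ((a ^ 2 + b ^ 2 - c ^ 2) / (2 * a * b))) := by
  rw [sin_arccos_cosineRule hb hc, sin_arccos_cosineRule (a := c) ha hb, heronProduct_rotate a b c]
  field_simp

theorem hasDerivAt_cosineRule_opposite (a b c : ℝ) :
    HasDerivAt (fun s => (b ^ 2 + c ^ 2 - s ^ 2) / (2 * b * c)) (-(a / (b * c))) a := by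
  refine (((hasDerivAt_pow 2 a).const_sub (b ^ 2 + c ^ 2)).div_const (2 * b * c)).congr_deriv ?_
  ring

theorem hasDerivAt_cosineRule_adjacent {b c : ℝ} (a : ℝ) (hb : b ≠ 0) (hc : c ≠ 0) :
    HasDerivAt (fun s => (s ^ 2 + c ^ 2 - a ^ 2) / (2 * s * c))
      ((a ^ 2 + b ^ 2 - c ^ 2) / (2 * b ^ 2 * c)) b := by
  have hnum := ((hasDerivAt_pow 2 b).add_const (c ^ 2)).sub_const (a ^ 2)
  have hden := ((hasDerivAt_id' b).const_mul 2).mul_const c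
  refine (hnum.div hden (by simp [hb, hc])).congr_deriv ?_
  field_simp
  ring

theorem euclidean_angle_derivs_general
    (a b c : ℝ)
    (h1 : a < b + c) (h2 : b < a + c) (h3 : c < a + b) :
    HasDerivAt (fun s => arccos ((b ^ 2 + c ^ 2 - s ^ 2) / (2 * b * c)))
      (1 / (b * sin (arccos ((a ^ 2 + b ^ 2 - c ^ 2) / (2 * a * b))))) a ∧
    HasDerivAt (fun s => arccos ((s ^ 2 + c ^ 2 - a ^ 2) / (2 * s * c)))
      (-(cos (arccos ((a ^ 2 + b ^ 2 - c ^ 2) / (2 * a * b))) /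
          sin (arccos ((a ^ 2 + b ^ 2 - c ^ 2) / (2 * a * b)))) / b) b := by
  have ha : 0 < a := by linarith
  have hb : 0 < b := by linarith
  have hc : 0 < c := by linarith
  obtain ⟨hα₁, hα₂⟩ := cosineRule_mem_Ioo h1 h2 h3
  obtain ⟨hγ₁, hγ₂⟩ := cosineRule_mem_Ioo h3 (by linarith) (by linarith : b < c + a)
  have hsinα := sin_arccos_pos hα₁ hα₂
  have hsinγ := sin_arccos_pos hγ₁ hγ₂
  have hsines := law_sin_arccos ha hb hc
  rw [cos_arccos hγ₁.le hγ₂.le]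
  refine ⟨((hasDerivAt_cosineRule_opposite a b c).arccos hα₁ hα₂).congr_deriv ?_,
    ((hasDerivAt_cosineRule_adjacent a hb.ne' hc.ne').arccos hα₁ hα₂).congr_deriv ?_⟩ <;>
  generalize sin (arccos ((b ^ 2 + c ^ 2 - a ^ 2) / (2 * b * c))) = sinα at * <;>
  generalize sin (arccos ((a ^ 2 + b ^ 2 - c ^ 2) / (2 * a * b))) = sinγ at * <;>
  field_simp
  · linarith
  · linear_combination (a ^ 2 + b ^ 2 - c ^ 2) * hsines

/-- For a Euclidean triangle with angles α, β, γ opposite to sides a, b, c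
(determined by the law of cosines), ∂α/∂a = 1/(b sin γ) and ∂α/∂b = −(cot γ)/b. -/
theorem euclidean_angle_derivs
    (a b c : ℝ) (ha : 0 < a) (hb : 0 < b) (hc : 0 < c)
    (h1 : a < b + c) (h2 : b < a + c) (h3 : c < a + b) :
    HasDerivAt (fun s => arccos ((b ^ 2 + c ^ 2 - s ^ 2) / (2 * b * c)))
      (1 / (b * sin (arccos ((a ^ 2 + b ^ 2 - c ^ 2) / (2 * a * b))))) a ∧
    HasDerivAt (fun s => arccos ((s ^ 2 + c ^ 2 - a ^ 2) / (2 * s * c)))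
      (-(cos (arccos ((a ^ 2 + b ^ 2 - c ^ 2) / (2 * a * b))) /
          sin (arccos ((a ^ 2 + b ^ 2 - c ^ 2) / (2 * a * b)))) / b) b :=
  euclidean_angle_derivs_general a b c h1 h2 h3
end

section
/- For a spherical triangle with side c and adjacent angles both equal to γ ∈ (0, π) at the base vertices, with opposite sides a, b satisfying a + b = π: cos c = −cos²a + sin²a cos γ, and consequently c > γ whenever a ∉ {0, π/2, π} — more precisely, 1 + cos c = sin²a (1 + cos γ) ≤ 1 + cos γ with strict inequality when sin²a < 1, hence c ≥ γ with equality iff a = π/2. -/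
open Real

/-- The computation of Lemma 4.3: for a spherical triangle with sides a, b, c, angle γ
opposite to c, and a + b = π, one has cos c = −cos²a + sin²a·cos γ,
1 + cos c = sin²a (1 + cos γ) ≤ 1 + cos γ (strictly if sin²a < 1),
hence γ ≤ c with equality iff a = π/2. -/
theorem lune_complement_side_comparison
    (a b c γ : ℝ) (ha : 0 < a) (ha' : a < π) (hab : a + b = π)
    (hγ : 0 < γ) (hγ' : γ < π) (hc : 0 ≤ c) (hc' : c ≤ π)
    (hlaw : cos c = cos a * cos b + sin a * sin b * cos γ) :
    cos c = -(cos a) ^ 2 + (sin a) ^ 2 * cos γ ∧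
    1 + cos c = (sin a) ^ 2 * (1 + cos γ) ∧
    1 + cos c ≤ 1 + cos γ ∧
    ((sin a) ^ 2 < 1 → 1 + cos c < 1 + cos γ) ∧
    γ ≤ c ∧ (c = γ ↔ a = π / 2) := by
  have hb : b = π - a := by linarith
  subst hb
  rw [Real.cos_pi_sub, Real.sin_pi_sub] at hlaw
  have h1 : cos c = -(cos a) ^ 2 + (sin a) ^ 2 * cos γ := by rw [hlaw]; ring
  have hpyth := Real.sin_sq_add_cos_sq a
  have h2 : 1 + cos c = (sin a) ^ 2 * (1 + cos γ) := by rw [h1]; nlinarith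
  have hγpos : 0 < 1 + cos γ := by nlinarith [Real.cos_lt_cos_of_nonneg_of_le_pi hγ.le le_rfl hγ', Real.cos_pi]
  have hsle : (sin a) ^ 2 ≤ 1 := by nlinarith [sq_nonneg (cos a)]
  have h3 : 1 + cos c ≤ 1 + cos γ := by nlinarith
  have h4 : (sin a) ^ 2 < 1 → 1 + cos c < 1 + cos γ := fun h => by nlinarith
  have hcc : cos c ≤ cos γ := by linarith
  have h5 : γ ≤ c := by
    by_contra hlt
    push_neg at hlt
    have := Real.cos_lt_cos_of_nonneg_of_le_pi hc hγ'.le hlt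
    linarith
  refine ⟨h1, h2, h3, h4, h5, ?_⟩
  constructor
  · intro hceq
    by_contra hane
    have hs : (sin a) ^ 2 < 1 := by
      have hsne : cos a ≠ 0 := fun h => hane (by
        have := Real.cos_eq_zero_iff.mp h
        obtain ⟨k, hk⟩ := this
        have h0 : (0:ℝ) < ((2*k+1 : ℤ) : ℝ) := by push_cast; nlinarith [Real.pi_pos]
        have h2' : ((2*k+1 : ℤ) : ℝ) < 2 := by push_cast; nlinarith [Real.pi_pos]
        have hk0 : k = 0 := by
          have := Int.cast_pos.mp h0
          have : (2*k+1 : ℤ) < 2 := by exact_mod_cast h2'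
          omega
        rw [hk0] at hk; push_cast at hk; linarith)
      have hpos : 0 < cos a ^ 2 := by positivity
      nlinarith
    have := h4 hs
    rw [hceq] at this
    linarith
  · intro haeq
    subst haeq
    have hs : sin (π/2) = 1 := Real.sin_pi_div_two
    have : cos c = cos γ := by rw [h1]; simp [Real.cos_pi_div_two, hs]
    have := Real.injOn_cos ⟨hc, hc'⟩ ⟨hγ.le, hγ'.le⟩ this
    exact this
end

section
/- A spherical triangle inscribed in a circle of spherical radius r on the unit sphere, whose circumcenter lies inside the triangle, has perimeter at least 4r. -/
/-!
Project the vertices `vᵢ` onto the plane orthogonal to the center `o`: `uᵢ = vᵢ - cos r • o`.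
Since `o` lies in the cone over the triangle, `0` is a nonnegative combination of the `uᵢ`, so
one `-uᵢ` lies in the cone spanned by the other two and the central angles `θᵢⱼ = ∠ uᵢ uⱼ` add
up to `2π`. Two points of the circle at central angle `θ` are at spherical distance
`arccos (cos² r + sin² r cos θ) = 2 arcsin (sin r sin (θ / 2))`, a concave function of
`θ ∈ [0, π]` vanishing at `0` and equal to `2r` at `π`; hence it is at least `2rθ/π`, and
summing over the three sides gives `4r`.
-/

open Real Set InnerProductGeometry
open scoped RealInnerProductSpace

section Angles

variable {V : Type*} [NormedAddCommGroup V] [InnerProductSpace ℝ V]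

lemma angle_add_angle_eq_of_nonneg_combination {x y : V} (hx : x ≠ 0) (hy : y ≠ 0) {α β : ℝ}
    (hα : 0 ≤ α) (hβ : 0 ≤ β) (hαβ : 0 < α + β) :
    angle x (α • x + β • y) + angle (α • x + β • y) y = angle x y := by
  set p : V := (α / (α + β)) • x + (β / (α + β)) • y
  have hp : Wbtw ℝ x p y := by
    refine ⟨β / (α + β), ⟨by positivity, (div_le_one hαβ).2 (by linarith)⟩, ?_⟩
    rw [AffineMap.lineMap_apply_module]
    simp only [p]
    congr 1
    rw [one_sub_div hαβ.ne', add_sub_cancel_right]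
  have hsplit := EuclideanGeometry.angle_add_of_ne_of_ne hx.symm hy.symm hp
  simp only [EuclideanGeometry.angle, vsub_eq_sub, sub_zero] at hsplit
  have hscale : α • x + β • y = (α + β) • p := by
    simp only [p, smul_add, smul_smul, mul_div_cancel₀ _ hαβ.ne']
  rwa [hscale, angle_smul_right_of_pos _ _ hαβ, angle_smul_left_of_pos _ _ hαβ]

lemma angle_add_angle_add_angle_eq_two_pi_of_third_pos {u₁ u₂ u₃ : V} (h₁ : u₁ ≠ 0)
    (h₂ : u₂ ≠ 0) (h₃ : u₃ ≠ 0) {w₁ w₂ w₃ : ℝ} (hw₁ : 0 ≤ w₁) (hw₂ : 0 ≤ w₂) (hw₃ : 0 < w₃)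
    (h : w₁ • u₁ + w₂ • u₂ + w₃ • u₃ = 0) :
    angle u₁ u₂ + angle u₂ u₃ + angle u₃ u₁ = 2 * π := by
  have hneg : w₁ • u₁ + w₂ • u₂ = w₃ • -u₃ := by
    rw [smul_neg, eq_neg_iff_add_eq_zero, h]
  have hw : 0 < w₁ + w₂ := by
    by_contra! hle
    have hw₁' : w₁ = 0 := by linarith
    have hw₂' : w₂ = 0 := by linarith
    simp [hw₁', hw₂', hw₃.ne', h₃] at h
  have hsplit := angle_add_angle_eq_of_nonneg_combination h₁ h₂ hw₁ hw₂ hw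
  rw [hneg, angle_smul_right_of_pos _ _ hw₃, angle_smul_left_of_pos _ _ hw₃, angle_neg_right,
    angle_neg_left, angle_comm u₁ u₃, angle_comm u₃ u₂] at hsplit
  linarith

lemma angle_add_angle_add_angle_eq_two_pi {u₁ u₂ u₃ : V} (h₁ : u₁ ≠ 0)
    (h₂ : u₂ ≠ 0) (h₃ : u₃ ≠ 0) {w₁ w₂ w₃ : ℝ} (hw₁ : 0 ≤ w₁) (hw₂ : 0 ≤ w₂) (hw₃ : 0 ≤ w₃)
    (hw : 0 < w₁ + w₂ + w₃) (h : w₁ • u₁ + w₂ • u₂ + w₃ • u₃ = 0) :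
    angle u₁ u₂ + angle u₂ u₃ + angle u₃ u₁ = 2 * π := by
  rcases hw₁.lt_or_eq with hw₁ | rfl
  · have := angle_add_angle_add_angle_eq_two_pi_of_third_pos h₂ h₃ h₁ hw₂ hw₃ hw₁
      (by rw [← h]; abel)
    linarith
  rcases hw₂.lt_or_eq with hw₂ | rfl
  · have := angle_add_angle_add_angle_eq_two_pi_of_third_pos h₃ h₁ h₂ hw₃ le_rfl hw₂
      (by rw [← h]; abel)
    linarith
  exact angle_add_angle_add_angle_eq_two_pi_of_third_pos h₁ h₂ h₃ le_rfl le_rfl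
    (by linarith) h

end Angles

lemma arccos_one_sub_two_mul_sq {s : ℝ} (h0 : 0 ≤ s) (h1 : s ≤ 1) :
    arccos (1 - 2 * s ^ 2) = 2 * arcsin s := by
  have hcos : cos (2 * arcsin s) = 1 - 2 * s ^ 2 := by
    rw [cos_two_mul, cos_arcsin, sq_sqrt (by nlinarith)]
    ring
  rw [← hcos, arccos_cos (by linarith [arcsin_nonneg.2 h0]) (by linarith [arcsin_le_pi_div_two s])]

lemma antitoneOn_mul_cos_div_sqrt_one_sub_sq_mul_sin {k : ℝ} (hk0 : 0 ≤ k) (hk1 : k < 1) :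
    AntitoneOn (fun x => k * cos x / √(1 - (k * sin x) ^ 2)) (Icc 0 (π / 2)) := by
  intro x hx y hy hxy
  have hsin_sq_lt (z : ℝ) : (k * sin z) ^ 2 < 1 := by
    rw [mul_pow]
    nlinarith [sin_sq_le_one z, sq_nonneg (sin z)]
  have hsx := sub_pos.2 (hsin_sq_lt x)
  have hsy := sub_pos.2 (hsin_sq_lt y)
  have hcosx : 0 ≤ cos x := cos_nonneg_of_mem_Icc ⟨by linarith [hx.1, pi_pos], hx.2⟩
  have hcosy : 0 ≤ cos y := cos_nonneg_of_mem_Icc ⟨by linarith [hy.1, pi_pos], hy.2⟩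
  have hsinx : 0 ≤ sin x := sin_nonneg_of_nonneg_of_le_pi hx.1 (by linarith [hx.2, pi_pos])
  have hsin : sin x ≤ sin y :=
    sin_le_sin_of_le_of_le_pi_div_two (by linarith [hx.1, pi_pos]) hy.2 hxy
  rw [div_le_div_iff₀ (sqrt_pos.2 hsy) (sqrt_pos.2 hsx)]
  refine (pow_le_pow_iff_left₀ (by positivity) (by positivity) two_ne_zero).1 ?_
  have hlhs : (k * cos y * √(1 - (k * sin x) ^ 2)) ^ 2
      = k ^ 2 * (1 - sin y ^ 2) * (1 - (k * sin x) ^ 2) := by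
    rw [mul_pow, sq_sqrt hsx.le, mul_pow, cos_sq']
  have hrhs : (k * cos x * √(1 - (k * sin y) ^ 2)) ^ 2
      = k ^ 2 * (1 - sin x ^ 2) * (1 - (k * sin y) ^ 2) := by
    rw [mul_pow, sq_sqrt hsy.le, mul_pow, cos_sq']
  -- the two squares differ by `k² (1 - k²) (sin² y - sin² x)`
  rw [hlhs, hrhs]
  nlinarith [mul_nonneg (mul_nonneg (sq_nonneg k) (by nlinarith : 0 ≤ 1 - k ^ 2))
    (sub_nonneg.2 (pow_le_pow_left₀ hsinx hsin 2))]

lemma concaveOn_arcsin_mul_sin {k : ℝ} (hk0 : 0 ≤ k) (hk1 : k < 1) :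
    ConcaveOn ℝ (Icc 0 (π / 2)) fun x => arcsin (k * sin x) := by
  have habs (x : ℝ) : |k * sin x| < 1 := by
    rw [abs_mul, abs_of_nonneg hk0]
    exact (mul_le_of_le_one_right hk0 (abs_sin_le_one x)).trans_lt hk1
  have hderiv (x : ℝ) : HasDerivAt (fun x => arcsin (k * sin x))
      (k * cos x / √(1 - (k * sin x) ^ 2)) x := by
    exact ((hasDerivAt_arcsin (abs_lt.1 (habs x)).1.ne' (abs_lt.1 (habs x)).2.ne).comp x
      ((hasDerivAt_sin x).const_mul k)).congr_deriv (one_div_mul_eq_div _ _)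
  refine AntitoneOn.concaveOn_of_deriv (convex_Icc _ _)
    (continuous_arcsin.comp (continuous_sin.const_mul k)).continuousOn
    (fun x _ => (hderiv x).differentiableAt.differentiableWithinAt) ?_
  rw [funext fun x => (hderiv x).deriv]
  exact (antitoneOn_mul_cos_div_sqrt_one_sub_sq_mul_sin hk0 hk1).mono interior_subset

lemma two_mul_mul_div_pi_le_arccos {r θ : ℝ} (hr0 : 0 ≤ r) (hr : r < π / 2) (hθ0 : 0 ≤ θ)
    (hθ : θ ≤ π) : 2 * r * θ / π ≤ arccos (cos r ^ 2 + sin r ^ 2 * cos θ) := by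
  have hk0 : 0 ≤ sin r := sin_nonneg_of_nonneg_of_le_pi hr0 (by linarith [pi_pos])
  have hk1 : sin r < 1 := by
    simpa using strictMonoOn_sin ⟨by linarith, hr.le⟩ ⟨by linarith [pi_pos], le_rfl⟩ hr
  have hhalf0 : 0 ≤ sin (θ / 2) := sin_nonneg_of_nonneg_of_le_pi (by linarith) (by linarith)
  have hcos : cos r ^ 2 + sin r ^ 2 * cos θ = 1 - 2 * (sin r * sin (θ / 2)) ^ 2 := by
    have hhalf : cos θ = 1 - 2 * sin (θ / 2) ^ 2 := by
      have := cos_two_mul' (θ / 2)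
      rw [mul_div_cancel₀ θ two_ne_zero, cos_sq'] at this
      linarith
    rw [hhalf]
    linear_combination sin_sq_add_cos_sq r
  rw [hcos, arccos_one_sub_two_mul_sq (mul_nonneg hk0 hhalf0)
    (mul_le_one₀ hk1.le hhalf0 (sin_le_one _))]
  have hpi := pi_pos
  have hchord := (concaveOn_arcsin_mul_sin hk0 hk1).2
    (show 0 ∈ Icc 0 (π / 2) by constructor <;> positivity)
    (show π / 2 ∈ Icc 0 (π / 2) from ⟨by positivity, le_rfl⟩)
    (show 0 ≤ 1 - θ / π by rw [sub_nonneg, div_le_one hpi]; exact hθ)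
    (show 0 ≤ θ / π by positivity) (sub_add_cancel 1 (θ / π))
  simp only [smul_eq_mul, mul_zero, sin_zero, arcsin_zero, zero_add, sin_pi_div_two, mul_one,
    arcsin_sin (by linarith) hr.le] at hchord
  rw [show θ / π * (π / 2) = θ / 2 by field_simp] at hchord
  calc 2 * r * θ / π = 2 * (θ / π * r) := by ring
    _ ≤ 2 * arcsin (sin r * sin (θ / 2)) := by linarith

section Sphere

variable {V : Type*} [NormedAddCommGroup V] [InnerProductSpace ℝ V]

lemma real_inner_eq_cos_of_arccos_eq {x y : V} {r : ℝ} (hx : ‖x‖ = 1) (hy : ‖y‖ = 1)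
    (h : arccos ⟪x, y⟫ = r) : ⟪x, y⟫ = cos r :=
  h ▸ (cos_arccos (neg_one_le_real_inner_of_norm_eq_one hx hy)
    (real_inner_le_one_of_norm_eq_one hx hy)).symm

lemma norm_sub_cos_smul_eq_sin {o v : V} {r : ℝ} (ho : ‖o‖ = 1) (hv : ‖v‖ = 1)
    (hov : ⟪o, v⟫ = cos r) (hr : 0 ≤ sin r) : ‖v - cos r • o‖ = sin r := by
  rw [← sq_eq_sq₀ (norm_nonneg _) hr, norm_sub_sq_real, norm_smul, real_inner_smul_right,
    real_inner_comm, hov, ho, hv, norm_eq_abs, mul_one, sq_abs]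
  linear_combination -sin_sq_add_cos_sq r

lemma inner_eq_cos_sq_add_sin_sq_mul_cos_angle {o v w : V} {r : ℝ} (ho : ‖o‖ = 1)
    (hv : ‖v‖ = 1) (hw : ‖w‖ = 1) (hov : ⟪o, v⟫ = cos r) (how : ⟪o, w⟫ = cos r)
    (hr : 0 ≤ sin r) :
    ⟪v, w⟫ = cos r ^ 2 + sin r ^ 2 * cos (angle (v - cos r • o) (w - cos r • o)) := by
  have h := cos_angle_mul_norm_mul_norm (v - cos r • o) (w - cos r • o)
  rw [norm_sub_cos_smul_eq_sin ho hv hov hr, norm_sub_cos_smul_eq_sin ho hw how hr] at h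
  simp only [inner_sub_left, inner_sub_right, real_inner_smul_left, real_inner_smul_right,
    real_inner_self_eq_norm_sq o, ho, real_inner_comm o v, hov, how] at h
  linear_combination -h

lemma two_mul_mul_angle_div_pi_le_arccos_inner {o v w : V} {r : ℝ} (ho : ‖o‖ = 1)
    (hv : ‖v‖ = 1) (hw : ‖w‖ = 1) (hov : ⟪o, v⟫ = cos r) (how : ⟪o, w⟫ = cos r)
    (hr0 : 0 ≤ r) (hr : r < π / 2) :
    2 * r * angle (v - cos r • o) (w - cos r • o) / π ≤ arccos ⟪v, w⟫ := by
  rw [inner_eq_cos_sq_add_sin_sq_mul_cos_angle ho hv hw hov how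
    (sin_nonneg_of_nonneg_of_le_pi hr0 (by linarith [pi_pos]))]
  exact two_mul_mul_div_pi_le_arccos hr0 hr (angle_nonneg _ _) (angle_le_pi _ _)

end Sphere

/-- A spherical triangle inscribed in a circle of spherical radius r < π/2 whose
center lies in the (closed) triangle has perimeter at least 4r. -/
theorem inscribed_spherical_triangle_perimeter
    (o v₁ v₂ v₃ : EuclideanSpace ℝ (Fin 3)) (r : ℝ)
    (ho : ‖o‖ = 1) (h₁ : ‖v₁‖ = 1) (h₂ : ‖v₂‖ = 1) (h₃ : ‖v₃‖ = 1)
    (hr : 0 < r) (hr' : r < π / 2)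
    (hd₁ : arccos (inner ℝ o v₁ : ℝ) = r)
    (hd₂ : arccos (inner ℝ o v₂ : ℝ) = r)
    (hd₃ : arccos (inner ℝ o v₃ : ℝ) = r)
    (hin : ∃ w₁ w₂ w₃ : ℝ, 0 ≤ w₁ ∧ 0 ≤ w₂ ∧ 0 ≤ w₃ ∧
      ∃ lam : ℝ, 0 < lam ∧ w₁ • v₁ + w₂ • v₂ + w₃ • v₃ = lam • o) :
    4 * r ≤ arccos (inner ℝ v₁ v₂ : ℝ) + arccos (inner ℝ v₂ v₃ : ℝ) +
      arccos (inner ℝ v₃ v₁ : ℝ) := by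
  have hcos : 0 < cos r := cos_pos_of_mem_Ioo ⟨by linarith, hr'⟩
  have hsin : 0 < sin r := sin_pos_of_pos_of_lt_pi hr (by linarith)
  have ho₁ := real_inner_eq_cos_of_arccos_eq ho h₁ hd₁
  have ho₂ := real_inner_eq_cos_of_arccos_eq ho h₂ hd₂
  have ho₃ := real_inner_eq_cos_of_arccos_eq ho h₃ hd₃
  obtain ⟨w₁, w₂, w₃, hw₁, hw₂, hw₃, lam, hlam, hcomb⟩ := hin
  have hlam_eq : (w₁ + w₂ + w₃) * cos r = lam := by
    have h := congrArg (inner ℝ o) hcomb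
    simp only [inner_add_right, real_inner_smul_right, ho₁, ho₂, ho₃,
      real_inner_self_eq_norm_sq, ho] at h
    linear_combination h
  have hw : 0 < w₁ + w₂ + w₃ := pos_of_mul_pos_left (hlam_eq ▸ hlam) hcos.le
  have hcenter : w₁ • (v₁ - cos r • o) + w₂ • (v₂ - cos r • o) + w₃ • (v₃ - cos r • o) = 0 :=
    calc _ = (w₁ • v₁ + w₂ • v₂ + w₃ • v₃) - ((w₁ + w₂ + w₃) * cos r) • o := by module
      _ = 0 := by rw [hcomb, hlam_eq, sub_self]
  have hne (v : EuclideanSpace ℝ (Fin 3)) (hv : ‖v‖ = 1) (hov : ⟪o, v⟫ = cos r) :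
      v - cos r • o ≠ 0 :=
    norm_ne_zero_iff.1 (norm_sub_cos_smul_eq_sin ho hv hov hsin.le ▸ hsin.ne')
  have hsum := angle_add_angle_add_angle_eq_two_pi (hne v₁ h₁ ho₁) (hne v₂ h₂ ho₂)
    (hne v₃ h₃ ho₃) hw₁ hw₂ hw₃ hw hcenter
  calc 4 * r = 2 * r * (2 * π) / π := by field_simp; ring
    _ = 2 * r * angle (v₁ - cos r • o) (v₂ - cos r • o) / π
        + 2 * r * angle (v₂ - cos r • o) (v₃ - cos r • o) / π
        + 2 * r * angle (v₃ - cos r • o) (v₁ - cos r • o) / π := by rw [← hsum]; ring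
    _ ≤ _ := by
      gcongr <;> exact two_mul_mul_angle_div_pi_le_arccos_inner ho ‹_› ‹_› ‹_› ‹_› hr.le hr'
end

section
/- Let P ⊂ ℝ³ be a convex polytope with vertices p₁,…,p_m and angle defects δ₁,…,δ_m (δᵢ = 2π minus the total angle at vertex pᵢ, so δᵢ > 0 and Σδᵢ = 4π). Then for every i, ‖ Σ_{j≠i} δⱼ (pⱼ−pᵢ)/‖pⱼ−pᵢ‖ ‖ > δᵢ. -/
/-!
At `pᵢ` every direction `(pⱼ - pᵢ) / ‖pⱼ - pᵢ‖` is a nonnegative combination of the vertices of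
the spherical section, a closed spherical polygon of length `L = 2π - δᵢ < 2π`. Such a polygon
lies in a cap of radius `L / 4`: if `y` is the point halfway along the polygon from its first
vertex `x`, every vertex `z` satisfies `∠(z, x) + ∠(z, y) ≤ L / 2`, and this spherical ellipse
lies in the cap of radius `L / 4` about the midpoint of `x` and `y`. So every direction has inner
product at least `cos (L / 4) = sin (δᵢ / 4)` with the centre `e` of the cap, and pairing the sum
with `e` bounds its norm below by `(4π - δᵢ) sin (δᵢ / 4)`, which exceeds `δᵢ` by Jordan's
inequality `sin x ≥ 2x / π`.
-/

open Real InnerProductGeometry Finset Set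
open scoped RealInnerProductSpace

theorem exists_lt_mem_Icc_apply_succ {α : Type*} [LinearOrder α] (f : ℕ → α) {v : α} {n : ℕ}
    (hn : 0 < n) (hv : v ∈ Icc (f 0) (f n)) : ∃ b < n, v ∈ Icc (f b) (f (b + 1)) := by
  induction n, hn using Nat.le_induction with
  | base => exact ⟨0, zero_lt_one, hv⟩
  | succ n _ ih =>
    by_cases h : f n ≤ v
    · exact ⟨n, n.lt_succ_self, h, hv.2⟩
    · obtain ⟨b, hb, hbv⟩ := ih ⟨hv.1, (not_le.mp h).le⟩
      exact ⟨b, hb.trans n.lt_succ_self, hbv⟩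

section

variable {V : Type*} [NormedAddCommGroup V] [InnerProductSpace ℝ V]

theorem angle_le_sum_Ico (c : ℕ → V) {a b : ℕ} (ha : c a ≠ 0) (hab : a ≤ b) :
    angle (c a) (c b) ≤ ∑ l ∈ Ico a b, angle (c l) (c (l + 1)) := by
  induction b, hab using Nat.le_induction with
  | base => simp [angle_self ha]
  | succ b hab ih =>
    rw [sum_Ico_succ_top hab]
    linarith [angle_le_angle_add_angle (c a) (c b) (c (b + 1))]

theorem angle_eq_pi_of_smul_add_smul_eq_zero {x z : V} (hx : x ≠ 0) (hz : z ≠ 0) {s : ℝ}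
    (hs : s ∈ Icc (0 : ℝ) 1) (h : (1 - s) • x + s • z = 0) : angle x z = π := by
  have hs0 : 0 < s := by
    rcases hs.1.lt_or_eq with h0 | rfl
    · exact h0
    · simp [hx] at h
  have hs1 : s < 1 := by
    rcases hs.2.lt_or_eq with h1 | rfl
    · exact h1
    · simp [hz] at h
  rw [← angle_smul_right_of_pos x z hs0, eq_neg_of_add_eq_zero_right h, angle_neg_right,
    angle_smul_right_of_pos x x (by linarith), angle_self hx, sub_zero]

theorem exists_angle_eq_of_mem_Icc {x z : V} (hx : x ≠ 0) (hz : z ≠ 0) (hxz : angle x z < π)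
    {t : ℝ} (ht : t ∈ Icc 0 (angle x z)) :
    ∃ y ≠ 0, angle x y = t ∧ angle y z = angle x z - t := by
  set g : ℝ → V := fun s => (1 - s) • x + s • z
  have hg : ∀ s ∈ Icc (0 : ℝ) 1, g s ≠ 0 := fun s hs h =>
    hxz.ne (angle_eq_pi_of_smul_add_smul_eq_zero hx hz hs h)
  have hcont : ContinuousOn (fun s => angle x (g s)) (Icc 0 1) := fun s hs =>
    ((continuousAt_angle (x := (x, g s)) hx (hg s hs)).comp
      (f := fun s => (x, g s)) (by fun_prop)).continuousWithinAt
  obtain ⟨s, hs, hst⟩ := intermediate_value_Icc zero_le_one hcont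
    (by simpa [g, angle_self hx] using ht)
  refine ⟨g s, hg s hs, hst, ?_⟩
  have hspan : g s ∈ Submodule.span NNReal {x, z} :=
    Submodule.mem_span_pair.mpr ⟨⟨1 - s, by linarith [hs.2]⟩, ⟨s, hs.1⟩, rfl⟩
  linarith [angle_eq_angle_add_add_angle_add_of_mem_span (hg s hs) hspan]

theorem norm_add_eq_two_mul_cos_half_angle {x y : V} (hx : ‖x‖ = 1) (hy : ‖y‖ = 1) :
    ‖x + y‖ = 2 * cos (angle x y / 2) := by
  have hcos : 0 ≤ cos (angle x y / 2) := cos_nonneg_of_mem_Icc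
    ⟨by linarith [angle_nonneg x y, pi_pos], by linarith [angle_le_pi x y]⟩
  have hsq : ‖x + y‖ ^ 2 = (2 * cos (angle x y / 2)) ^ 2 := by
    rw [norm_add_sq_real, hx, hy, inner_eq_cos_angle_of_norm_eq_one hx hy, mul_pow, cos_sq,
      mul_div_cancel₀ _ two_ne_zero]
    ring
  exact (sq_eq_sq₀ (norm_nonneg _) (by positivity)).mp hsq

theorem cos_half_mul_norm_add_le_inner {x y z : V} (hx : ‖x‖ = 1) (hy : ‖y‖ = 1) (hz : ‖z‖ = 1)
    {C : ℝ} (hC : C ≤ π) (h : angle z x + angle z y ≤ C) :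
    cos (C / 2) * ‖x + y‖ ≤ ⟪z, x + y⟫ := by
  set a := angle z x
  set b := angle z y
  set d := angle x y
  have ha := angle_nonneg z x
  have hb := angle_nonneg z y
  have hab : |a - b| ≤ d := abs_sub_le_iff.mpr
    ⟨by linarith [angle_le_angle_add_angle z y x, angle_comm y x],
      by linarith [angle_le_angle_add_angle z x y]⟩
  have hsum : cos (C / 2) ≤ cos ((a + b) / 2) :=
    cos_le_cos_of_nonneg_of_le_pi (by linarith) (by linarith) (by linarith)
  have hdiff : cos (d / 2) ≤ cos ((a - b) / 2) := by
    rw [← cos_abs ((a - b) / 2), abs_div, abs_two]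
    exact cos_le_cos_of_nonneg_of_le_pi (by positivity) (by linarith [angle_le_pi x y])
      (by linarith)
  have hC0 : 0 ≤ cos (C / 2) :=
    cos_nonneg_of_mem_Icc ⟨by linarith [pi_pos], by linarith⟩
  have hd0 : 0 ≤ cos (d / 2) :=
    cos_nonneg_of_mem_Icc ⟨by linarith [angle_nonneg x y, pi_pos], by linarith [angle_le_pi x y]⟩
  calc cos (C / 2) * ‖x + y‖ = 2 * (cos (C / 2) * cos (d / 2)) := by
        rw [norm_add_eq_two_mul_cos_half_angle hx hy]; ring
    _ ≤ 2 * (cos ((a + b) / 2) * cos ((a - b) / 2)) := by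
        gcongr
        exact hC0.trans hsum
    _ = ⟪z, x + y⟫ := by
        rw [inner_add_right, inner_eq_cos_angle_of_norm_eq_one hz hx,
          inner_eq_cos_angle_of_norm_eq_one hz hy, cos_add_cos]
        ring

noncomputable def sphericalLength (c : ℕ → V) (n : ℕ) : ℝ :=
  ∑ l ∈ range n, angle (c l) (c (l + 1))

theorem sphericalLength_nonneg (c : ℕ → V) (n : ℕ) : 0 ≤ sphericalLength c n :=
  sum_nonneg fun _ _ => angle_nonneg _ _

theorem sphericalLength_succ (c : ℕ → V) (n : ℕ) :
    sphericalLength c (n + 1) = sphericalLength c n + angle (c n) (c (n + 1)) :=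
  sum_range_succ _ _

theorem angle_le_sphericalLength_sub (c : ℕ → V) {a b : ℕ} (ha : c a ≠ 0) (hab : a ≤ b) :
    angle (c a) (c b) ≤ sphericalLength c b - sphericalLength c a := by
  rw [sphericalLength, sphericalLength, ← sum_Ico_eq_sub _ hab]
  exact angle_le_sum_Ico c ha hab

theorem two_mul_angle_le_sphericalLength {c : ℕ → V} (hc : ∀ l, c l ≠ 0) {n : ℕ}
    (hclosed : c n = c 0) {b : ℕ} (hb : b < n) :
    2 * angle (c b) (c (b + 1)) ≤ sphericalLength c n := by
  have hback : angle (c (b + 1)) (c b) ≤ angle (c (b + 1)) (c n) + angle (c 0) (c b) :=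
    hclosed ▸ angle_le_angle_add_angle _ _ _
  have h1 := angle_le_sphericalLength_sub c (hc (b + 1)) hb
  have h2 := angle_le_sphericalLength_sub c (hc 0) (Nat.zero_le b)
  have h0 : sphericalLength c 0 = 0 := sum_range_zero _
  linarith [sphericalLength_succ c b, angle_comm (c b) (c (b + 1))]

theorem exists_angle_add_angle_le_half_sphericalLength {c : ℕ → V} (hc : ∀ l, c l ≠ 0)
    {n : ℕ} (hn : 0 < n) (hclosed : c n = c 0) (hP : sphericalLength c n < 2 * π) :
    ∃ y ≠ 0, ∀ l ≤ n, angle (c l) (c 0) + angle (c l) y ≤ sphericalLength c n / 2 := by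
  have hS0 : sphericalLength c 0 = 0 := sum_range_zero _
  have hSn := sphericalLength_nonneg c n
  obtain ⟨b, hbn, hb⟩ := exists_lt_mem_Icc_apply_succ (sphericalLength c) hn
    (v := sphericalLength c n / 2) ⟨by linarith, by linarith⟩
  have hedge := sphericalLength_succ c b
  have hα : angle (c b) (c (b + 1)) < π := by
    linarith [two_mul_angle_le_sphericalLength hc hclosed hbn]
  obtain ⟨y, hy, hby, hyb⟩ := exists_angle_eq_of_mem_Icc (hc b) (hc (b + 1)) hα
    (t := sphericalLength c n / 2 - sphericalLength c b) ⟨by linarith [hb.1], by linarith [hb.2]⟩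
  refine ⟨y, hy, fun l hl => ?_⟩
  rcases le_or_gt l b with hlb | hbl
  · have h1 := angle_le_sphericalLength_sub c (hc 0) (Nat.zero_le l)
    have h2 := angle_le_sphericalLength_sub c (hc l) hlb
    linarith [angle_comm (c l) (c 0), angle_le_angle_add_angle (c l) (c b) y]
  · have h1 := angle_le_sphericalLength_sub c (hc l) hl
    have h2 := angle_le_sphericalLength_sub c (hc (b + 1)) hbl
    rw [hclosed] at h1
    linarith [angle_comm (c l) y, angle_le_angle_add_angle y (c (b + 1)) (c l)]

theorem exists_cos_le_inner_of_closed_chain {c : ℕ → V} (hc : ∀ l, ‖c l‖ = 1) {n : ℕ}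
    (hn : 0 < n) (hclosed : c n = c 0) (hP : sphericalLength c n < 2 * π) :
    ∃ e : V, ‖e‖ = 1 ∧ ∀ l ≤ n, cos (sphericalLength c n / 4) ≤ ⟪c l, e⟫ := by
  have hc0 : ∀ l, c l ≠ 0 := fun l => norm_ne_zero_iff.mp ((hc l).symm ▸ one_ne_zero)
  obtain ⟨y, hy, hcap⟩ := exists_angle_add_angle_le_half_sphericalLength hc0 hn hclosed hP
  set P := sphericalLength c n
  set y' := NormedSpace.normalize y
  have hy' : ‖y'‖ = 1 := NormedSpace.norm_normalize_eq_one_iff.mpr hy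
  have hfoci : ∀ l ≤ n, angle (c l) (c 0) + angle (c l) y' ≤ P / 2 := fun l hl => by
    simpa only [y', angle_normalize_right] using hcap l hl
  have hxy : c 0 + y' ≠ 0 := by
    intro h
    have h0 := hfoci 0 (Nat.zero_le n)
    rw [angle_self (hc0 0), eq_neg_of_add_eq_zero_right h, angle_self_neg_of_nonzero (hc0 0)] at h0
    linarith
  refine ⟨NormedSpace.normalize (c 0 + y'), NormedSpace.norm_normalize_eq_one_iff.mpr hxy,
    fun l hl => ?_⟩
  have h := cos_half_mul_norm_add_le_inner (hc 0) hy' (hc l) (by linarith) (hfoci l hl)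
  rw [div_div, show (2 : ℝ) * 2 = 4 by norm_num] at h
  rw [NormedSpace.normalize, real_inner_smul_right, le_inv_mul_iff₀ (norm_pos_iff.mpr hxy)]
  linarith

theorem mul_norm_le_inner_sum_smul {ι : Type*} (t : Finset ι) {u : ι → V} {w : ι → ℝ} {e : V}
    {s : ℝ} (hs : 0 ≤ s) (hw : ∀ l ∈ t, 0 ≤ w l) (hu : ∀ l ∈ t, s * ‖u l‖ ≤ ⟪u l, e⟫) :
    s * ‖∑ l ∈ t, w l • u l‖ ≤ ⟪∑ l ∈ t, w l • u l, e⟫ := by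
  calc s * ‖∑ l ∈ t, w l • u l‖ ≤ s * ∑ l ∈ t, w l * ‖u l‖ := by
        gcongr
        refine (norm_sum_le _ _).trans (le_of_eq (sum_congr rfl fun l hl => ?_))
        rw [norm_smul, Real.norm_of_nonneg (hw l hl)]
    _ = ∑ l ∈ t, w l * (s * ‖u l‖) := by rw [mul_sum]; ring_nf
    _ ≤ ∑ l ∈ t, w l * ⟪u l, e⟫ := sum_le_sum fun l hl => by gcongr; exacts [hw l hl, hu l hl]
    _ = ⟪∑ l ∈ t, w l • u l, e⟫ := by simp only [sum_inner, real_inner_smul_left]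

theorem mul_sum_le_norm_sum_smul {ι : Type*} (t : Finset ι) {v : ι → V} {w : ι → ℝ} {e : V}
    (he : ‖e‖ = 1) {s : ℝ} (hw : ∀ j ∈ t, 0 ≤ w j) (hv : ∀ j ∈ t, s ≤ ⟪v j, e⟫) :
    s * ∑ j ∈ t, w j ≤ ‖∑ j ∈ t, w j • v j‖ :=
  calc s * ∑ j ∈ t, w j ≤ ∑ j ∈ t, w j * ⟪v j, e⟫ := by
        rw [mul_sum]
        exact sum_le_sum fun j hj => by rw [mul_comm]; gcongr; exacts [hw j hj, hv j hj]
    _ = ⟪∑ j ∈ t, w j • v j, e⟫ := by simp only [sum_inner, real_inner_smul_left]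
    _ ≤ ‖∑ j ∈ t, w j • v j‖ := by simpa [he] using real_inner_le_norm (∑ j ∈ t, w j • v j) e

end

theorem lt_four_pi_sub_mul_sin {δ : ℝ} (h0 : 0 < δ) (h2 : δ < 2 * π) :
    δ < (4 * π - δ) * sin (δ / 4) := by
  have hjordan := mul_le_sin (x := δ / 4) (by positivity) (by linarith)
  have hπ := pi_pos
  calc δ < (4 * π - δ) * (2 / π * (δ / 4)) := by
        rw [show (4 * π - δ) * (2 / π * (δ / 4)) = δ * ((4 * π - δ) / (2 * π)) by
          field_simp; ring]
        exact lt_mul_of_one_lt_right h0 ((one_lt_div (by positivity)).mpr (by linarith))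
    _ ≤ (4 * π - δ) * sin (δ / 4) := by gcongr; linarith

open Fin.NatCast

/-- Lemma 4.8: for a convex polytope in ℝ³ with vertices pᵢ and angle defects δᵢ
(0 < δᵢ < 2π, Σδᵢ = 4π), where for each i the unit vectors from pᵢ to the other
vertices lie in a convex spherical polygon of perimeter 2π − δᵢ (the spherical
section of the polytope at pᵢ), one has ‖Σ_{j≠i} δⱼ (pⱼ−pᵢ)/‖pⱼ−pᵢ‖‖ > δᵢ. -/
theorem defect_sum_inequality
    (m : ℕ) (p : Fin m → EuclideanSpace ℝ (Fin 3)) (hinj : Function.Injective p)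
    (δ : Fin m → ℝ) (hδ : ∀ i, 0 < δ i ∧ δ i < 2 * π) (hsum : ∑ i, δ i = 4 * π)
    (hsec : ∀ i : Fin m, ∃ (k : ℕ) (u : Fin (k + 1) → EuclideanSpace ℝ (Fin 3)),
      (∀ l, ‖u l‖ = 1) ∧
      (∑ l, arccos (inner ℝ (u l) (u (l + 1)) : ℝ)) = 2 * π - δ i ∧
      ∀ j, j ≠ i → ∃ w : Fin (k + 1) → ℝ, (∀ l, 0 ≤ w l) ∧
        ∃ lam : ℝ, 0 < lam ∧
          ∑ l, w l • u l = lam • ((‖p j - p i‖)⁻¹ • (p j - p i)))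
    (i : Fin m) :
    δ i < ‖∑ j ∈ Finset.univ.erase i, δ j • ((‖p j - p i‖)⁻¹ • (p j - p i))‖ := by
  obtain ⟨hδ0, hδ2⟩ := hδ i
  obtain ⟨k, u, hu, hperim, hcone⟩ := hsec i
  have hlen : sphericalLength (fun l : ℕ => u l) (k + 1) = 2 * π - δ i := by
    rw [sphericalLength, ← Fin.sum_univ_eq_sum_range (fun l => angle (u l) (u (l + 1 : ℕ))),
      ← hperim]
    refine sum_congr rfl fun l _ => ?_
    simp [angle, hu, Fin.cast_val_eq_self]
  obtain ⟨e, he, hue⟩ := exists_cos_le_inner_of_closed_chain (c := fun l : ℕ => u l)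
    (fun l => hu _) k.succ_pos (by simp) (by linarith)
  have hs0 : 0 ≤ sin (δ i / 4) := sin_nonneg_of_nonneg_of_le_pi (by linarith) (by linarith)
  have hs : ∀ l, sin (δ i / 4) ≤ ⟪u l, e⟫ := fun l => by
    have := hue l l.is_le'
    rwa [hlen, show (2 * π - δ i) / 4 = π / 2 - δ i / 4 by ring, cos_pi_div_two_sub,
      Fin.cast_val_eq_self] at this
  have hdir : ∀ j ∈ univ.erase i, sin (δ i / 4) ≤ ⟪‖p j - p i‖⁻¹ • (p j - p i), e⟫ := by
    intro j hj
    obtain ⟨w, hw, lam, hlam, heq⟩ := hcone j (ne_of_mem_erase hj)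
    have hunit : ‖‖p j - p i‖⁻¹ • (p j - p i)‖ = 1 :=
      norm_smul_inv_norm (sub_ne_zero.mpr (hinj.ne (ne_of_mem_erase hj)))
    have h := mul_norm_le_inner_sum_smul univ hs0 (fun l _ => hw l)
      (fun l _ => by rw [hu l, mul_one]; exact hs l)
    rw [heq, norm_smul, real_inner_smul_left, hunit, Real.norm_of_nonneg hlam.le, mul_one,
      mul_comm] at h
    exact le_of_mul_le_mul_left h hlam
  calc δ i < (4 * π - δ i) * sin (δ i / 4) := lt_four_pi_sub_mul_sin hδ0 hδ2
    _ = sin (δ i / 4) * ∑ j ∈ univ.erase i, δ j := by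
        rw [sum_erase_eq_sub (mem_univ i), hsum]; ring
    _ ≤ _ := mul_sum_le_norm_sum_smul _ he (fun j _ => (hδ j).1.le) hdir
end

section
/- If R₁,…,R_m ∈ SO(3) are rotations where Rᵢ is rotation by angle t·κᵢ around unit vector vᵢ, and R_m ∘ ⋯ ∘ R₁ = id for all members of a sequence t = t_n → 0 of parameters (with vᵢ = vᵢ(n) → vᵢ), then Σᵢ κᵢ vᵢ = 0. In the first-order form: for rotations by small angles, Rᵢ(x) = x + t κᵢ [vᵢ, x] + o(t), and the composition being the identity forces the sum Σᵢ κᵢ vᵢ(n) = o(1). -/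
/-!
Along the sequence, the rotation by angle `t κᵢ` about `vᵢ` moves a point `y ≈ x` by
`t κᵢ • wᵢ ⨯₃ x + o(t)`, and first-order terms of this kind add up under composition.
Since the composition is the identity, `∑ κᵢ • wᵢ ⨯₃ x = 0` for every `x`, and only the zero
vector has vanishing cross product with every vector.
-/

open Matrix

/-- Rotation of ℝ³ by angle θ around the unit axis u (Rodrigues' formula). -/
noncomputable def rot (θ : ℝ) (u : Fin 3 → ℝ) : (Fin 3 → ℝ) → (Fin 3 → ℝ) :=
  fun x => Real.cos θ • x + Real.sin θ • (crossProduct u x)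
    + ((1 - Real.cos θ) * (u ⬝ᵥ x)) • u

open Filter Topology

section FirstOrder

variable {ι E : Type*} [NormedAddCommGroup E] [NormedSpace ℝ E] {l : Filter ι} {t : ι → ℝ}

/-- `R n (y n) = y n + t n • D x + o(t n)` along `l`, for every `y` converging to `x`. -/
def HasFirstOrderTerm (l : Filter ι) (t : ι → ℝ) (R : ι → E → E) (D : E → E) : Prop :=
  ∀ ⦃y : ι → E⦄ ⦃x : E⦄, Tendsto y l (𝓝 x) →
    Tendsto (fun n => (t n)⁻¹ • (R n (y n) - y n)) l (𝓝 (D x))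

theorem hasFirstOrderTerm_id : HasFirstOrderTerm l t (fun _ => (id : E → E)) 0 := by
  intro y x _
  simpa using tendsto_const_nhds

theorem HasFirstOrderTerm.tendsto_apply {R : ι → E → E} {D : E → E}
    (hR : HasFirstOrderTerm l t R D) (ht : Tendsto t l (𝓝[≠] 0)) {y : ι → E} {x : E}
    (hy : Tendsto y l (𝓝 x)) : Tendsto (fun n => R n (y n)) l (𝓝 x) := by
  have hsmall : Tendsto (fun n => t n • (t n)⁻¹ • (R n (y n) - y n)) l (𝓝 ((0 : ℝ) • D x)) :=
    (tendsto_nhds_of_tendsto_nhdsWithin ht).smul (hR hy)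
  have heq : ∀ᶠ n in l, t n • (t n)⁻¹ • (R n (y n) - y n) = R n (y n) - y n := by
    filter_upwards [tendsto_nhdsWithin_iff.mp ht |>.2] with n hn
    exact smul_inv_smul₀ hn _
  have hdiff : Tendsto (fun n => R n (y n) - y n) l (𝓝 0) := by
    simpa using hsmall.congr' heq
  simpa using hy.add hdiff

theorem HasFirstOrderTerm.comp {R S : ι → E → E} {D D' : E → E}
    (hS : HasFirstOrderTerm l t S D') (hR : HasFirstOrderTerm l t R D)
    (ht : Tendsto t l (𝓝[≠] 0)) :
    HasFirstOrderTerm l t (fun n => S n ∘ R n) (D' + D) := by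
  intro y x hy
  have hsplit : ∀ n, (t n)⁻¹ • ((S n ∘ R n) (y n) - y n)
      = (t n)⁻¹ • (S n (R n (y n)) - R n (y n)) + (t n)⁻¹ • (R n (y n) - y n) := by
    intro n
    rw [← smul_add, Function.comp_apply, sub_add_sub_cancel]
  simpa only [hsplit, Pi.add_apply] using (hS (hR.tendsto_apply ht hy)).add (hR hy)

theorem HasFirstOrderTerm.foldl_comp_ofFn {m : ℕ} {R : Fin m → ι → E → E} {D : Fin m → E → E}
    (hR : ∀ i, HasFirstOrderTerm l t (R i) (D i)) (ht : Tendsto t l (𝓝[≠] 0)) :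
    HasFirstOrderTerm l t
      (fun n => (List.ofFn fun i => R i n).foldl (fun acc S => S ∘ acc) id) (∑ i, D i) := by
  induction m with
  | zero => simpa using hasFirstOrderTerm_id
  | succ m ih =>
    simp only [List.ofFn_succ', List.concat_eq_append, List.foldl_append, List.foldl_cons,
      List.foldl_nil, Fin.sum_univ_castSucc]
    rw [add_comm]
    exact (hR (Fin.last m)).comp (ih fun i => hR i.castSucc) ht

end FirstOrder

theorem continuous_crossProduct :
    Continuous fun p : (Fin 3 → ℝ) × (Fin 3 → ℝ) => p.1 ⨯₃ p.2 := by
  simp only [cross_apply]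
  fun_prop

theorem rot_sub_self (θ : ℝ) (u y : Fin 3 → ℝ) :
    rot θ u y - y = Real.sin θ • u ⨯₃ y + (1 - Real.cos θ) • ((u ⬝ᵥ y) • u - y) := by
  simp only [rot]
  module

theorem hasFirstOrderTerm_rot {ι : Type*} {l : Filter ι} {t : ι → ℝ} (κ : ℝ)
    (ht : Tendsto t l (𝓝[≠] 0)) {v : ι → Fin 3 → ℝ} {w : Fin 3 → ℝ} (hv : Tendsto v l (𝓝 w)) :
    HasFirstOrderTerm l t (fun n => rot (t n * κ) (v n)) (fun x => κ • w ⨯₃ x) := by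
  intro y x hy
  have hsin : Tendsto (fun n => (t n)⁻¹ * Real.sin (t n * κ)) l (𝓝 κ) := by
    have hd : HasDerivAt (fun s => Real.sin (s * κ)) κ 0 := by
      simpa using (hasDerivAt_mul_const (x := (0 : ℝ)) κ).sin
    simpa [Function.comp_def] using hd.tendsto_slope_zero.comp ht
  have hcos : Tendsto (fun n => (t n)⁻¹ * (1 - Real.cos (t n * κ))) l (𝓝 0) := by
    have hd : HasDerivAt (fun s => 1 - Real.cos (s * κ)) 0 0 := by
      simpa using (hasDerivAt_mul_const (x := (0 : ℝ)) κ).cos.const_sub 1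
    simpa [Function.comp_def] using hd.tendsto_slope_zero.comp ht
  have hcross : Tendsto (fun n => v n ⨯₃ y n) l (𝓝 (w ⨯₃ x)) :=
    (continuous_crossProduct.tendsto (w, x)).comp (hv.prodMk_nhds hy)
  have hdot : Tendsto (fun n => (v n ⬝ᵥ y n) • v n - y n) l (𝓝 ((w ⬝ᵥ x) • w - x)) :=
    (((continuous_fst.dotProduct continuous_snd).tendsto (w, x)).comp
      (hv.prodMk_nhds hy)).smul hv |>.sub hy
  simpa [rot_sub_self, smul_add, smul_smul] using (hsin.smul hcross).add (hcos.smul hdot)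

theorem eq_zero_of_forall_cross_eq_zero {R : Type*} [CommRing R] {a : Fin 3 → R}
    (h : ∀ x, a ⨯₃ x = 0) : a = 0 := by
  have e₁ := h ![1, 0, 0]
  have e₂ := h ![0, 1, 0]
  simp only [cross_apply, Matrix.cons_val, mul_zero, mul_one, zero_sub, sub_zero] at e₁ e₂
  ext i
  fin_cases i
  · simpa using congrFun e₂ 2
  · simpa using congrFun e₁ 2
  · simpa using congrFun e₁ 1

theorem holonomy_first_order_general
    (m : ℕ) (κ : Fin m → ℝ) (t : ℕ → ℝ)
    (ht : Filter.Tendsto t Filter.atTop (nhds 0)) (htpos : ∀ n, 0 < t n)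
    (v : ℕ → Fin m → (Fin 3 → ℝ))
    (w : Fin m → (Fin 3 → ℝ))
    (hconv : ∀ i, Filter.Tendsto (fun n => v n i) Filter.atTop (nhds (w i)))
    (hhol : ∀ n, (List.ofFn (fun i : Fin m => rot (t n * κ i) (v n i))).foldl
        (fun acc R => R ∘ acc) id = id) :
    ∑ i, κ i • w i = 0 := by
  have ht' : Tendsto t atTop (𝓝[≠] 0) :=
    tendsto_nhdsWithin_iff.mpr ⟨ht, .of_forall fun n => (htpos n).ne'⟩
  have hfirst := HasFirstOrderTerm.foldl_comp_ofFn
    (fun i => hasFirstOrderTerm_rot (κ i) ht' (hconv i)) ht'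
  refine eq_zero_of_forall_cross_eq_zero fun x => ?_
  have hx := hfirst (tendsto_const_nhds (x := x))
  simp only [hhol, id, sub_self, smul_zero] at hx
  have hlin : (∑ i, κ i • w i) ⨯₃ x = (∑ i, fun x => κ i • w i ⨯₃ x) x := by
    simp [map_sum, LinearMap.sum_apply, Finset.sum_apply]
  rw [hlin]
  exact tendsto_nhds_unique hx tendsto_const_nhds

/-- First-order holonomy computation of Lemma 4.10: if the rotations by angles tₙ·κᵢ
around unit axes vᵢ(n) compose to the identity, with tₙ → 0, tₙ > 0 and vᵢ(n) → wᵢ,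
then Σᵢ κᵢ wᵢ = 0. -/
theorem holonomy_first_order
    (m : ℕ) (κ : Fin m → ℝ) (t : ℕ → ℝ)
    (ht : Filter.Tendsto t Filter.atTop (nhds 0)) (htpos : ∀ n, 0 < t n)
    (v : ℕ → Fin m → (Fin 3 → ℝ)) (hvunit : ∀ n i, v n i ⬝ᵥ v n i = 1)
    (w : Fin m → (Fin 3 → ℝ))
    (hconv : ∀ i, Filter.Tendsto (fun n => v n i) Filter.atTop (nhds (w i)))
    (hhol : ∀ n, (List.ofFn (fun i : Fin m => rot (t n * κ i) (v n i))).foldl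
        (fun acc R => R ∘ acc) id = id) :
    ∑ i, κ i • w i = 0 :=
  holonomy_first_order_general m κ t ht htpos v w hconv hhol
end
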